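/- For m = 12 and ζ = exp(2πi/12): f₁₂(6,6,4,8) = 4/3, f₁₂(6,6,2,10) = 4, f₁₂(4,8,3,9) = 3/2, f₁₂(4,8,2,10) = 3, f₁₂(3,9,2,10) = 2, and f₁₂(4,4,1,7) = 3, where f₁₂(k₁,k₂,k₃,k₄) = ((1−ζ^{k₁})(1−ζ^{k₂}))/((1−ζ^{k₃})(1−ζ^{k₄})). -/

import Mathlib

/-!
For `k + l = 12` the product `(1 - ζ^k)(1 - ζ^l) = |1 - ζ^k|²` equals `2 - 2 cos (π k / 6)`,
which is `4, 3, 2, 1` for `k = 6, 4, 3, 2`; the first five values are quotients of two such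
products.
For `f₁₂(4,4,1,7)` use `ζ⁶ = -1`, so that the denominator is `(1 - ζ)(1 + ζ) = 1 - ζ²`, and
`ζ⁴ = ζ² - 1`, so that the numerator is `(2 - ζ²)² = 3 (1 - ζ²)`.
-/

noncomputable def zeta12 : ℂ := Complex.exp (2 * Real.pi * Complex.I / 12)

noncomputable def f12 (k1 k2 k3 k4 : ℕ) : ℂ :=
  ((1 - zeta12 ^ k1) * (1 - zeta12 ^ k2)) / ((1 - zeta12 ^ k3) * (1 - zeta12 ^ k4))

open Complex Real

theorem one_sub_pow_mul_one_sub_pow_sub {R : Type*} [CommRing R] {ζ : R} {n k : ℕ}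
    (hζ : ζ ^ n = 1) (hk : k ≤ n) :
    (1 - ζ ^ k) * (1 - ζ ^ (n - k)) = 2 - (ζ ^ k + ζ ^ (n - k)) := by
  linear_combination (pow_mul_pow_sub ζ hk).trans hζ

theorem Complex.exp_two_pi_mul_I_div_pow_add_pow_sub {n k : ℕ} (hn : n ≠ 0) (hk : k ≤ n) :
    exp (2 * π * I / n) ^ k + exp (2 * π * I / n) ^ (n - k) = 2 * Real.cos (2 * π * k / n) := by
  have hn' : (n : ℂ) ≠ 0 := Nat.cast_ne_zero.mpr hn
  have hsub : ((n - k : ℕ) : ℂ) * (2 * π * I / n) = 2 * π * I - 2 * π * k / n * I := by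
    push_cast [hk]
    field_simp
  rw [← exp_nat_mul, ← exp_nat_mul, hsub, exp_sub, exp_two_pi_mul_I, one_div, ← exp_neg,
    ofReal_cos, two_cos]
  push_cast
  ring_nf

theorem zeta12_pow_add_pow_sub {k : ℕ} (hk : k ≤ 12) :
    zeta12 ^ k + zeta12 ^ (12 - k) = 2 * Real.cos (π * k / 6) := by
  have h := Complex.exp_two_pi_mul_I_div_pow_add_pow_sub (n := 12) (by norm_num) hk
  rw [Nat.cast_ofNat] at h
  rw [zeta12, h]
  congr 3
  ring

theorem one_sub_zeta12_pow_mul_one_sub_pow_sub {k : ℕ} (hk : k ≤ 12) :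
    (1 - zeta12 ^ k) * (1 - zeta12 ^ (12 - k)) = 2 - 2 * Real.cos (π * k / 6) := by
  have h12 : zeta12 ^ 12 = 1 := by
    rw [zeta12, ← Complex.exp_nat_mul]
    convert exp_two_pi_mul_I using 2
    push_cast
    ring
  rw [one_sub_pow_mul_one_sub_pow_sub h12 hk, zeta12_pow_add_pow_sub hk]

theorem zeta12_pow_six : zeta12 ^ 6 = -1 := by
  have h := zeta12_pow_add_pow_sub (k := 6) (by norm_num)
  norm_num at h
  linear_combination h / 2

theorem one_sub_zeta12_pow_six_mul_self : (1 - zeta12 ^ 6) * (1 - zeta12 ^ 6) = 4 := by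
  rw [zeta12_pow_six]; norm_num

theorem one_sub_zeta12_pow_four_mul_one_sub_pow_eight :
    (1 - zeta12 ^ 4) * (1 - zeta12 ^ 8) = 3 := by
  have h := one_sub_zeta12_pow_mul_one_sub_pow_sub (k := 4) (by norm_num)
  rw [show π * ((4 : ℕ) : ℝ) / 6 = π - π / 3 by push_cast; ring, Real.cos_pi_sub,
    Real.cos_pi_div_three] at h
  norm_num at h
  exact h

theorem one_sub_zeta12_pow_three_mul_one_sub_pow_nine :
    (1 - zeta12 ^ 3) * (1 - zeta12 ^ 9) = 2 := by
  have h := one_sub_zeta12_pow_mul_one_sub_pow_sub (k := 3) (by norm_num)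
  rw [show π * ((3 : ℕ) : ℝ) / 6 = π / 2 by push_cast; ring, Real.cos_pi_div_two] at h
  norm_num at h
  exact h

theorem one_sub_zeta12_sq_mul_one_sub_pow_ten :
    (1 - zeta12 ^ 2) * (1 - zeta12 ^ 10) = 1 := by
  have h := one_sub_zeta12_pow_mul_one_sub_pow_sub (k := 2) (by norm_num)
  rw [show π * ((2 : ℕ) : ℝ) / 6 = π / 3 by push_cast; ring, Real.cos_pi_div_three] at h
  norm_num at h
  exact h

-- `ζ` is a root of the cyclotomic polynomial `Φ₁₂ = X⁴ - X² + 1`.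
theorem zeta12_pow_four_sub_sq_add_one : zeta12 ^ 4 - zeta12 ^ 2 + 1 = 0 := by
  linear_combination
    one_sub_zeta12_sq_mul_one_sub_pow_ten + (1 + zeta12 ^ 4 - zeta12 ^ 6) * zeta12_pow_six

theorem f12_four_four_one_seven : f12 4 4 1 7 = 3 := by
  have hden : (1 - zeta12 ^ 1) * (1 - zeta12 ^ 7) = 1 - zeta12 ^ 2 := by
    linear_combination (zeta12 ^ 2 - zeta12) * zeta12_pow_six
  have hden_ne : 1 - zeta12 ^ 2 ≠ 0 :=
    left_ne_zero_of_mul_eq_one one_sub_zeta12_sq_mul_one_sub_pow_ten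
  rw [f12, hden, div_eq_iff hden_ne]
  linear_combination (zeta12 ^ 4 + zeta12 ^ 2 - 2) * zeta12_pow_four_sub_sq_add_one

/-- The rational values of f₁₂ on selected quadruples of D₁₂:
f₁₂(6,6,4,8) = 4/3, f₁₂(6,6,2,10) = 4, f₁₂(4,8,3,9) = 3/2, f₁₂(4,8,2,10) = 3,
f₁₂(3,9,2,10) = 2, f₁₂(4,4,1,7) = 3. -/
theorem f12_values :
    f12 6 6 4 8 = 4 / 3 ∧ f12 6 6 2 10 = 4 ∧ f12 4 8 3 9 = 3 / 2 ∧
      f12 4 8 2 10 = 3 ∧ f12 3 9 2 10 = 2 ∧ f12 4 4 1 7 = 3 := by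
  refine ⟨?_, ?_, ?_, ?_, ?_, f12_four_four_one_seven⟩ <;>
    simp only [f12, one_sub_zeta12_pow_six_mul_self, one_sub_zeta12_pow_four_mul_one_sub_pow_eight,
      one_sub_zeta12_pow_three_mul_one_sub_pow_nine, one_sub_zeta12_sq_mul_one_sub_pow_ten] <;>
    norm_num
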